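/- If X ⊆ ℝⁿ is a closed convex set and x is a regular boundary point of e_r(X), then there is a unique point x̄ on the boundary of X with dist(x, x̄) = r; moreover x̄ is a regular point of X and the unique supporting hyperplane of e_r(X) at x is parallel to the unique supporting hyperplane of X at x̄. -/

import Mathlib

open Metric Set

/-- The erosion of `X` by radius `r`: points of `X` at distance `≥ r` from the complement. -/
def eros {n : ℕ} (r : ℝ) (X : Set (EuclideanSpace ℝ (Fin n))) :
    Set (EuclideanSpace ℝ (Fin n)) :=
  {x ∈ X | ∀ y ∉ X, r ≤ dist x y}

/-- `x` is a regular point of `X`: a frontier point with a unique (unit-normal)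
supporting half-space. -/
def IsRegularPt {n : ℕ} (X : Set (EuclideanSpace ℝ (Fin n))) (x : EuclideanSpace ℝ (Fin n)) :
    Prop :=
  x ∈ frontier X ∧ ∃! f : EuclideanSpace ℝ (Fin n) →L[ℝ] ℝ, ‖f‖ = 1 ∧ ∀ y ∈ X, f y ≤ f x

/-!
For `x ∈ e_r(X)` the ball `closedBall x r` lies in `X`. If a unit functional `g` supports `X` at
`p` with `dist x p = r`, then `g` supports `e_r(X)` at `x` (each ball `closedBall z r`,
`z ∈ e_r(X)`, translated by `p - x` stays in `X`), and the equality case of Cauchy–Schwarz forces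
`p = x + r • u`, where `u` is the Riesz vector of `g`. A nearest point of `Xᶜ` to the frontier
point `x` of `e_r(X)` is such a `p`. By regularity of `e_r(X)` at `x`, every unit functional
supporting `X` at such a point is `f`; this gives the uniqueness of `p`, the regularity of `X` at
`p` and the parallelism.
-/

theorem Convex.exists_norm_eq_one_forall_le_of_notMem_interior {F : Type*}
    [NormedAddCommGroup F] [NormedSpace ℝ F] {A : Set F} (hA : Convex ℝ A)
    (hAint : (interior A).Nonempty) {p : F} (hp : p ∉ interior A) :
    ∃ g : StrongDual ℝ F, ‖g‖ = 1 ∧ ∀ a ∈ A, g a ≤ g p := by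
  obtain ⟨g, hg0, hg⟩ := geometric_hahn_banach_of_nonempty_interior_point hA hp hAint
  refine ⟨‖g‖⁻¹ • g, ?_, fun a ha => ?_⟩
  · rw [norm_smul, norm_inv, norm_norm, inv_mul_cancel₀ (norm_ne_zero_iff.2 hg0)]
  · simp only [FunLike.coe_smul, Pi.smul_apply, smul_eq_mul]
    exact mul_le_mul_of_nonneg_left (hg a ha) (by positivity)

theorem eq_add_smul_toDual_symm_of_closedBall_subset {F : Type*} [NormedAddCommGroup F]
    [InnerProductSpace ℝ F] [CompleteSpace F] {A : Set F} {x p : F} {r : ℝ}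
    {g : StrongDual ℝ F} (hball : closedBall x r ⊆ A) (hg : ‖g‖ = 1)
    (hgp : ∀ a ∈ A, g a ≤ g p) (hdist : dist x p = r) :
    p = x + r • (InnerProductSpace.toDual ℝ F).symm g := by
  set u := (InnerProductSpace.toDual ℝ F).symm g
  have hu : ‖u‖ = 1 := by rw [LinearIsometryEquiv.norm_map, hg]
  have hgu : ∀ y, inner ℝ u y = g y := fun y => InnerProductSpace.toDual_symm_apply
  have hpx : ‖p - x‖ = r := by rw [← dist_eq_norm, dist_comm, hdist]
  have hr : 0 ≤ r := hdist ▸ dist_nonneg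
  have hball_max : g x + r ≤ g p := by
    have h := hgp (x + r • u) (hball (by simp [norm_smul, abs_of_nonneg hr, hu]))
    rwa [map_add, map_smul, ← hgu u, real_inner_self_eq_norm_sq, hu, smul_eq_mul, one_pow,
      mul_one] at h
  have hcs : inner ℝ u (p - x) = ‖u‖ * ‖p - x‖ := by
    have := real_inner_le_norm u (p - x)
    rw [hgu, map_sub, hu, hpx] at *
    linarith
  have h := inner_eq_norm_mul_iff_real.mp hcs
  rw [hu, hpx, one_smul] at h
  rw [h]
  abel

section Erosion

variable {n : ℕ}

local notation "E" => EuclideanSpace ℝ (Fin n)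

theorem closedBall_subset_of_mem_eros {r : ℝ} (hr : 0 < r) {X : Set E} (hX : IsClosed X)
    {z : E} (hz : z ∈ eros r X) : closedBall z r ⊆ X := by
  have hball : ball z r ⊆ X := fun w hw => by
    by_contra hwX
    exact (mem_ball'.mp hw).not_ge (hz.2 w hwX)
  calc closedBall z r = closure (ball z r) := (closure_ball z hr.ne').symm
    _ ⊆ X := closure_minimal hball hX

theorem isClosed_eros {r : ℝ} {X : Set E} (hX : IsClosed X) : IsClosed (eros r X) := by
  have heq : eros r X = X ∩ ⋂ y ∈ Xᶜ, {z : E | r ≤ dist z y} := by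
    ext z
    simp only [eros, mem_inter_iff, mem_iInter, mem_compl_iff]
    rfl
  rw [heq]
  exact hX.inter (isClosed_biInter fun y _ => isClosed_le continuous_const (continuous_id.dist
    continuous_const))

theorem forall_le_on_eros_of_forall_le {r : ℝ} (hr : 0 < r) {X : Set E} (hX : IsClosed X)
    {x p : E} (hdist : dist x p ≤ r) {g : StrongDual ℝ E} (hgp : ∀ y ∈ X, g y ≤ g p) :
    ∀ z ∈ eros r X, g z ≤ g x := by
  intro z hz
  have hmem : z + (p - x) ∈ X := closedBall_subset_of_mem_eros hr hX hz <| by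
    rwa [mem_closedBall, dist_self_add_left, ← dist_eq_norm, dist_comm]
  have := hgp _ hmem
  rw [map_add, map_sub] at this
  linarith

theorem setOf_lt_infDist_compl_subset_eros {r : ℝ} (hr : 0 ≤ r) (X : Set E) :
    {z | r < infDist z Xᶜ} ⊆ eros r X := by
  intro z hz
  refine ⟨?_, fun y hy => hz.le.trans (infDist_le_dist_of_mem hy)⟩
  by_contra hzX
  have : infDist z Xᶜ = 0 := infDist_zero_of_mem hzX
  exact (hz.trans_eq this).not_ge hr

theorem exists_mem_frontier_dist_eq_of_mem_frontier_eros {r : ℝ} (hr : 0 < r) {X : Set E}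
    (hX : IsClosed X) {x : E} (hx : x ∈ frontier (eros r X)) :
    ∃ p ∈ frontier X, dist x p = r := by
  have hxe : x ∈ eros r X := (isClosed_eros hX).frontier_subset hx
  have hXc : Xᶜ.Nonempty := by
    refine nonempty_compl.2 fun hXuniv => ?_
    have : eros r X = univ := by simp [eros, hXuniv]
    simp [this] at hx
  have hinf_ge : r ≤ infDist x Xᶜ := (le_infDist hXc).2 fun y hy => hxe.2 y hy
  have hinf_le : infDist x Xᶜ ≤ r := by
    by_contra! hlt
    have hopen : IsOpen {z : E | r < infDist z Xᶜ} :=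
      isOpen_lt continuous_const (continuous_infDist_pt _)
    exact hx.2 (interior_maximal (setOf_lt_infDist_compl_subset_eros hr.le X) hopen hlt)
  obtain ⟨p, hpcl, hpdist⟩ := isClosed_closure.exists_infDist_eq_dist hXc.closure x
  rw [infDist_closure, le_antisymm hinf_le hinf_ge] at hpdist
  have hpX : p ∈ X := closedBall_subset_of_mem_eros hr hX hxe (by
    rw [mem_closedBall, dist_comm, ← hpdist])
  exact ⟨p, ⟨subset_closure hpX, by rwa [closure_compl] at hpcl⟩, hpdist.symm⟩

end Erosion

theorem regular_point_of_erosion {n : ℕ} (X : Set (EuclideanSpace ℝ (Fin n)))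
    (hX : IsClosed X) (hconv : Convex ℝ X) (r : ℝ) (hr : 0 < r)
    (x : EuclideanSpace ℝ (Fin n)) (hx : IsRegularPt (eros r X) x)
    (f : EuclideanSpace ℝ (Fin n) →L[ℝ] ℝ) (hf : ‖f‖ = 1)
    (hsupp : ∀ y ∈ eros r X, f y ≤ f x) :
    ∃ xbar, (xbar ∈ frontier X ∧ dist x xbar = r) ∧
      (∀ y, y ∈ frontier X ∧ dist x y = r → y = xbar) ∧
      IsRegularPt X xbar ∧ (∀ y ∈ X, f y ≤ f xbar) := by
  have hxe : x ∈ eros r X := (isClosed_eros hX).frontier_subset hx.1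
  have hball : closedBall x r ⊆ X := closedBall_subset_of_mem_eros hr hX hxe
  have hint : (interior X).Nonempty :=
    ⟨x, interior_mono hball (ball_subset_interior_closedBall (mem_ball_self hr))⟩
  have heq_f : ∀ p, dist x p = r → ∀ g : StrongDual ℝ _, ‖g‖ = 1 →
      (∀ y ∈ X, g y ≤ g p) → g = f := fun p hp g hg hgp =>
    hx.2.unique ⟨hg, forall_le_on_eros_of_forall_le hr hX hp.le hgp⟩ ⟨hf, hsupp⟩
  have hf_supp : ∀ p ∈ frontier X, dist x p = r → ∀ y ∈ X, f y ≤ f p := by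
    intro p hp hdist
    obtain ⟨g, hg, hgp⟩ := hconv.exists_norm_eq_one_forall_le_of_notMem_interior hint hp.2
    exact heq_f p hdist g hg hgp ▸ hgp
  obtain ⟨p, hp, hdist⟩ := exists_mem_frontier_dist_eq_of_mem_frontier_eros hr hX hx.1
  have hpf := hf_supp p hp hdist
  refine ⟨p, ⟨hp, hdist⟩, fun y ⟨hy, hydist⟩ => ?_,
    ⟨hp, f, ⟨hf, hpf⟩, fun g ⟨hg, hgp⟩ => heq_f p hdist g hg hgp⟩, hpf⟩
  rw [eq_add_smul_toDual_symm_of_closedBall_subset hball hf (hf_supp y hy hydist) hydist,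
    eq_add_smul_toDual_symm_of_closedBall_subset hball hf hpf hdist]
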